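/- arXiv:2412.20644 — 3 statements merged into one kernel-verified Lean document; each statement's English description precedes it below -/
import Mathlib

section
/- The uncertainty coverage function is submodular: for finite sets A ⊆ B ⊆ X and any point x̃ ∈ X, UC(A ∪ {x̃}) - UC(A) ≥ UC(B ∪ {x̃}) - UC(B). -/
noncomputable def maxOr0 {X : Type*} (S : Finset X) (f : X → ℝ) : ℝ :=
  WithBot.unbotD 0 (S.sup fun x => ((f x : ℝ) : WithBot ℝ))

noncomputable def UC {X : Type*} {N : ℕ} (x : Fin N → X) (U : X → ℝ)
    (k : X → X → ℝ) (S : Finset X) : ℝ :=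
  (1 / (N : ℝ)) * ∑ n : Fin N, U (x n) * maxOr0 S (k (x n))

/-! For a nonnegative kernel, `UC(S ∪ {x̃}) - UC(S)` is a nonnegative combination of the marginal
gains `max m c - m`, where `m` is the coverage of a sample point by `S` and `c` its coverage by `x̃`.
The coverage `m` grows with `S`, and `m ↦ max m c - m = max (c - m) 0` is antitone. -/

open Finset NNReal

section maxOr0

variable {X : Type*} {f : X → ℝ}

/-- For nonnegative `f` the junk value `0` of `maxOr0 ∅ f` is the bottom of `ℝ≥0`, so `maxOr0` is
an honest supremum there. -/
theorem maxOr0_eq_coe_sup_toNNReal (S : Finset X) (hf : 0 ≤ f) :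
    maxOr0 S f = ↑(S.sup fun a => (f a).toNNReal) := by
  induction S using Finset.cons_induction with
  | empty => simp [maxOr0]
  | cons a S ha ih =>
    rw [maxOr0] at ih ⊢
    rw [sup_cons, sup_cons, NNReal.coe_max, ← ih, Real.coe_toNNReal _ (hf a)]
    cases S.sup fun x => ((f x : ℝ) : WithBot ℝ) with
    | bot => simpa using hf a
    | coe r => rw [← WithBot.coe_max, WithBot.unbotD_coe, WithBot.unbotD_coe]

theorem maxOr0_mono {A B : Finset X} (hAB : A ⊆ B) (hf : 0 ≤ f) :
    maxOr0 A f ≤ maxOr0 B f := by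
  rw [maxOr0_eq_coe_sup_toNNReal A hf, maxOr0_eq_coe_sup_toNNReal B hf]
  exact NNReal.coe_le_coe.mpr (sup_mono hAB)

theorem maxOr0_union_singleton [DecidableEq X] (S : Finset X) (a : X) (hf : 0 ≤ f) :
    maxOr0 (S ∪ {a}) f = max (maxOr0 S f) (f a) := by
  rw [maxOr0_eq_coe_sup_toNNReal _ hf, maxOr0_eq_coe_sup_toNNReal _ hf, sup_union, sup_singleton,
    NNReal.coe_max, Real.coe_toNNReal _ (hf a)]

end maxOr0

theorem max_sub_self_antitone {a b : ℝ} (c : ℝ) (hab : a ≤ b) : max b c - b ≤ max a c - a := by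
  rw [← max_sub_sub_right, ← max_sub_sub_right, sub_self, sub_self]
  exact max_le_max le_rfl (sub_le_sub_left hab c)

theorem maxOr0_union_singleton_sub_antitone {X : Type*} [DecidableEq X] {f : X → ℝ} (hf : 0 ≤ f)
    {A B : Finset X} (hAB : A ⊆ B) (a : X) :
    maxOr0 (B ∪ {a}) f - maxOr0 B f ≤ maxOr0 (A ∪ {a}) f - maxOr0 A f := by
  rw [maxOr0_union_singleton B a hf, maxOr0_union_singleton A a hf]
  exact max_sub_self_antitone (f a) (maxOr0_mono hAB hf)

theorem UC_sub_UC {X : Type*} {N : ℕ} (x : Fin N → X) (U : X → ℝ) (k : X → X → ℝ)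
    (S T : Finset X) :
    UC x U k S - UC x U k T =
      (1 / (N : ℝ)) * ∑ n : Fin N, U (x n) * (maxOr0 S (k (x n)) - maxOr0 T (k (x n))) := by
  simp only [UC, mul_sub, sum_sub_distrib]

theorem uc_submodular_general {X : Type*} [DecidableEq X] {N : ℕ}
    (x : Fin N → X) (U : X → ℝ) (hU : ∀ a, 0 ≤ U a)
    (k : X → X → ℝ) (hk : ∀ a b, 0 ≤ k a b)
    (A B : Finset X) (hAB : A ⊆ B) (xt : X) :
    UC x U k (B ∪ {xt}) - UC x U k B ≤ UC x U k (A ∪ {xt}) - UC x U k A := by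
  rw [UC_sub_UC, UC_sub_UC]
  gcongr _ * ∑ n, _ * ?_ with n
  · exact hU _
  · exact maxOr0_union_singleton_sub_antitone (hk (x n)) hAB xt

theorem uc_submodular {X : Type*} [DecidableEq X] {N : ℕ} (hN : 0 < N)
    (x : Fin N → X) (U : X → ℝ) (hU : ∀ a, 0 ≤ U a)
    (k : X → X → ℝ) (hk : ∀ a b, 0 ≤ k a b)
    (A B : Finset X) (hAB : A ⊆ B) (xt : X) :
    UC x U k (B ∪ {xt}) - UC x U k B ≤ UC x U k (A ∪ {xt}) - UC x U k A :=
  uc_submodular_general x U hU k hk A B hAB xt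
end

section
/- Let k_σ(x, x') = ψ((g(x) - g(x'))/σ) where g : X → ℝ^d is injective on the finite set {x_1,...,x_N}, ψ : ℝ^d → [0,1] satisfies ψ(0) = 1 and lim_{a→∞} ψ(a·t) = 0 for every unit vector t. Then for any nonempty finite subset S of {x_1,...,x_N}, the uncertainty coverage UC_σ(S) = (1/N) ∑_n U(x_n) · max_{x'∈S} k_σ(x_n, x') converges, as σ → 0⁺, to (1/N) ∑_{x ∈ S} U(x). -/
open Filter Topology Finset

section maxOr0

variable {X : Type*} {S : Finset X}

@[simp]
lemma maxOr0_empty (f : X → ℝ) : maxOr0 ∅ f = 0 := rfl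

lemma maxOr0_eq_sup' (hS : S.Nonempty) (f : X → ℝ) : maxOr0 S f = S.sup' hS f := by
  rw [maxOr0, show (S.sup fun y ↦ ((f y : ℝ) : WithBot ℝ)) = S.sup' hS f from (coe_sup' hS f).symm,
    WithBot.unbotD_coe]

lemma Filter.Tendsto.maxOr0 {α : Type*} {l : Filter α} {F : α → X → ℝ} {f : X → ℝ}
    (hF : ∀ y ∈ S, Tendsto (F · y) l (𝓝 (f y))) :
    Tendsto (fun a ↦ _root_.maxOr0 S (F a)) l (𝓝 (_root_.maxOr0 S f)) := by
  rcases S.eq_empty_or_nonempty with rfl | hS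
  · simpa using tendsto_const_nhds
  · simp only [maxOr0_eq_sup' hS]
    exact Tendsto.finset_sup'_nhds_apply hS hF

lemma maxOr0_ite_eq [DecidableEq X] (y : X) {c : ℝ} (hc : 0 ≤ c) :
    maxOr0 S (fun y' ↦ if y = y' then c else 0) = if y ∈ S then c else 0 := by
  rcases S.eq_empty_or_nonempty with rfl | hS
  · simp
  rw [maxOr0_eq_sup' hS]
  split_ifs with hy
  · refine le_antisymm (sup'_le _ _ fun y' _ ↦ ?_) (le_sup'_of_le _ hy (by simp))
    split_ifs <;> simp [hc]
  · refine le_antisymm (sup'_le _ _ fun y' hy' ↦ ?_) ?_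
    · rw [if_neg (ne_of_mem_of_not_mem hy' hy).symm]
    · obtain ⟨y', hy'⟩ := hS
      exact le_sup'_of_le _ hy' (by split_ifs <;> simp [hc])

end maxOr0

lemma Finset.sum_ite_mem_of_injective {ι X M : Type*} [Fintype ι] [DecidableEq X]
    [AddCommMonoid M] {x : ι → X} (hx : Function.Injective x) {S : Finset X}
    (hS : S ⊆ univ.image x) (f : X → M) :
    ∑ i, (if x i ∈ S then f (x i) else 0) = ∑ s ∈ S, f s := by
  rw [← sum_filter, ← sum_preimage x S hx.injOn f fun s hs hsx ↦ ?_]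
  · congr 1; ext; simp
  · obtain ⟨i, -, rfl⟩ := mem_image.mp (hS hs)
    exact absurd ⟨i, rfl⟩ hsx

lemma tendsto_apply_inv_smul_nhdsGT_zero {E β : Type*} [NormedAddCommGroup E] [NormedSpace ℝ E]
    [TopologicalSpace β] {ψ : E → β} {b : β}
    (hψ : ∀ t : E, ‖t‖ = 1 → Tendsto (fun a : ℝ ↦ ψ (a • t)) atTop (𝓝 b)) {v : E} (hv : v ≠ 0) :
    Tendsto (fun σ : ℝ ↦ ψ (σ⁻¹ • v)) (𝓝[>] 0) (𝓝 b) := by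
  have hv' : 0 < ‖v‖ := norm_pos_iff.mpr hv
  have hscale : Tendsto (fun σ : ℝ ↦ σ⁻¹ * ‖v‖) (𝓝[>] 0) atTop :=
    tendsto_inv_nhdsGT_zero.atTop_mul_const hv'
  refine ((hψ _ (norm_smul_inv_norm (𝕜 := ℝ) hv)).comp hscale).congr fun σ ↦ ?_
  simp [smul_smul, hv'.ne']

lemma tendsto_apply_inv_smul_sub_of_injOn {X E : Type*} [NormedAddCommGroup E] [NormedSpace ℝ E]
    {g : X → E} {A : Set X} (hg : Set.InjOn g A) {ψ : E → ℝ} (hψ0 : ψ 0 = 1)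
    (hψ : ∀ t : E, ‖t‖ = 1 → Tendsto (fun a : ℝ ↦ ψ (a • t)) atTop (𝓝 0))
    {y y' : X} (hy : y ∈ A) (hy' : y' ∈ A) [Decidable (y = y')] :
    Tendsto (fun σ : ℝ ↦ ψ (σ⁻¹ • (g y - g y'))) (𝓝[>] 0) (𝓝 (if y = y' then 1 else 0)) := by
  split_ifs with h
  · simp [h, hψ0]
  · exact tendsto_apply_inv_smul_nhdsGT_zero hψ (sub_ne_zero.mpr fun e ↦ h (hg hy hy' e))

theorem uc_tendsto_sum_uncertainty_general {X : Type*} [DecidableEq X] {d N : ℕ}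
    (x : Fin N → X) (hx : Function.Injective x)
    (g : X → EuclideanSpace ℝ (Fin d)) (hg : Set.InjOn g (Set.range x))
    (U : X → ℝ)
    (ψ : EuclideanSpace ℝ (Fin d) → ℝ)
    (hψ0 : ψ 0 = 1)
    (hψlim : ∀ t : EuclideanSpace ℝ (Fin d), ‖t‖ = 1 →
      Filter.Tendsto (fun a : ℝ => ψ (a • t)) Filter.atTop (nhds 0))
    (S : Finset X) (hS : S ⊆ Finset.image x Finset.univ) :
    Filter.Tendsto
      (fun σ : ℝ => (1 / (N : ℝ)) * ∑ n : Fin N,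
        U (x n) * maxOr0 S (fun x' => ψ (σ⁻¹ • (g (x n) - g x'))))
      (nhdsWithin 0 (Set.Ioi 0))
      (nhds ((1 / (N : ℝ)) * ∑ s ∈ S, U s)) := by
  have hmax : ∀ n, Tendsto (fun σ : ℝ ↦ maxOr0 S fun x' ↦ ψ (σ⁻¹ • (g (x n) - g x')))
      (𝓝[>] 0) (𝓝 (if x n ∈ S then 1 else 0)) := fun n ↦ by
    rw [← maxOr0_ite_eq _ zero_le_one]
    exact Tendsto.maxOr0 fun s hs ↦ tendsto_apply_inv_smul_sub_of_injOn hg hψ0 hψlim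
      ⟨n, rfl⟩ (by simpa using hS hs)
  have hsum := (tendsto_finsetSum univ fun n _ ↦ (hmax n).const_mul (U (x n))).const_mul
    (1 / (N : ℝ))
  simpa only [mul_boole, sum_ite_mem_of_injective hx hS] using hsum

theorem uc_tendsto_sum_uncertainty {X : Type*} [DecidableEq X] {d N : ℕ}
    (x : Fin N → X) (hx : Function.Injective x)
    (g : X → EuclideanSpace ℝ (Fin d)) (hg : Set.InjOn g (Set.range x))
    (U : X → ℝ) (hU : ∀ a, 0 ≤ U a)
    (ψ : EuclideanSpace ℝ (Fin d) → ℝ)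
    (hψ01 : ∀ v, ψ v ∈ Set.Icc (0 : ℝ) 1)
    (hψ0 : ψ 0 = 1)
    (hψlim : ∀ t : EuclideanSpace ℝ (Fin d), ‖t‖ = 1 →
      Filter.Tendsto (fun a : ℝ => ψ (a • t)) Filter.atTop (nhds 0))
    (S : Finset X) (hSne : S.Nonempty) (hS : S ⊆ Finset.image x Finset.univ) :
    Filter.Tendsto
      (fun σ : ℝ => (1 / (N : ℝ)) * ∑ n : Fin N,
        U (x n) * maxOr0 S (fun x' => ψ (σ⁻¹ • (g (x n) - g x'))))
      (nhdsWithin 0 (Set.Ioi 0))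
      (nhds ((1 / (N : ℝ)) * ∑ s ∈ S, U s)) :=
  uc_tendsto_sum_uncertainty_general x hx g hg U ψ hψ0 hψlim S hS
end

section
/- Let f : Finset X → ℝ be a nonnegative, monotone, submodular function on subsets of a finite type X with f(∅) = 0, and let Ŝ_B be the set built by B steps of the greedy algorithm (at each step adding an element maximizing the marginal gain). Then f(Ŝ_B) ≥ (1 - (1 - 1/B)^B) · max_{|S| = B} f(S) ≥ (1 - 1/e) · max_{|S| = B} f(S). -/
theorem greedy_submodular_guarantee {X : Type*} [Fintype X] [Nonempty X]
    [DecidableEq X]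
    (f : Finset X → ℝ) (hf0 : f ∅ = 0)
    (hnonneg : ∀ S : Finset X, 0 ≤ f S)
    (hmono : ∀ A B : Finset X, A ⊆ B → f A ≤ f B)
    (hsubmod : ∀ A B : Finset X, A ⊆ B → ∀ x : X, x ∉ B →
      f (insert x B) - f B ≤ f (insert x A) - f A)
    (B : ℕ) (hB : 0 < B) (hBcard : B ≤ Fintype.card X)
    (Shat : ℕ → Finset X) (h0 : Shat 0 = ∅)
    (hstep : ∀ i < B, ∃ x : X,
      Shat (i + 1) = insert x (Shat i) ∧
      ∀ y : X, f (insert y (Shat i)) ≤ f (insert x (Shat i)))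
    (Sopt : Finset X) (hSopt : Sopt.card = B)
    (hopt : ∀ S : Finset X, S.card = B → f S ≤ f Sopt) :
    (1 - (1 - 1 / (B : ℝ)) ^ B) * f Sopt ≤ f (Shat B) ∧
    (1 - 1 / Real.exp 1) * f Sopt ≤ (1 - (1 - 1 / (B : ℝ)) ^ B) * f Sopt := by
  have hBpos : (0:ℝ) < B := by exact_mod_cast hB
  have hB1 : (1:ℝ) ≤ B := by exact_mod_cast hB
  have hfac : (0:ℝ) ≤ 1 - 1/(B:ℝ) := by
    have : 1/(B:ℝ) ≤ 1 := by
      rw [div_le_one hBpos]; exact hB1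
    linarith
  -- key submodularity lemma
  have key : ∀ (A S : Finset X),
      f (A ∪ S) ≤ f A + ∑ x ∈ S \ A, (f (insert x A) - f A) := by
    intro A S
    induction S using Finset.induction_on with
    | empty => simp
    | @insert a S ha ih =>
      by_cases haA : a ∈ A
      · have h1 : A ∪ insert a S = A ∪ S := by
          ext y
          simp only [Finset.mem_union, Finset.mem_insert]
          constructor
          · rintro (h | rfl | h) <;> tauto
          · tauto
        have h2 : insert a S \ A = S \ A := by
          ext y
          simp only [Finset.mem_sdiff, Finset.mem_insert]
          constructor
          · rintro ⟨rfl | h, hy⟩; exact absurd haA hy; exact ⟨h, hy⟩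
          · tauto
        rw [h1, h2]; exact ih
      · have h1 : A ∪ insert a S = insert a (A ∪ S) := Finset.union_insert a A S
        have h2 : insert a S \ A = insert a (S \ A) := by
          ext y
          simp only [Finset.mem_sdiff, Finset.mem_insert]
          constructor
          · rintro ⟨rfl | h, hy⟩; exact Or.inl rfl; exact Or.inr ⟨h, hy⟩
          · rintro (rfl | ⟨h, hy⟩); exact ⟨Or.inl rfl, haA⟩; exact ⟨Or.inr h, hy⟩
        have haAS : a ∉ A ∪ S := by simp [haA, ha]
        have hsub := hsubmod A (A ∪ S) Finset.subset_union_left a haAS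
        have hins : a ∉ S \ A := by simp [ha]
        rw [h1, h2, Finset.sum_insert hins]
        linarith
  -- one greedy step
  have step : ∀ i < B,
      f Sopt - f (Shat (i+1)) ≤ (1 - 1/(B:ℝ)) * (f Sopt - f (Shat i)) := by
    intro i hi
    obtain ⟨x, hx1, hx2⟩ := hstep i hi
    set Δ := f (Shat (i+1)) - f (Shat i) with hΔ
    have hΔ0 : 0 ≤ Δ := by
      rw [hΔ, hx1]
      have := hmono (Shat i) (insert x (Shat i)) (Finset.subset_insert _ _)
      linarith
    have hterm : ∀ y ∈ Sopt \ Shat i, f (insert y (Shat i)) - f (Shat i) ≤ Δ := by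
      intro y _
      rw [hΔ, hx1]
      have := hx2 y
      linarith
    have hsum : ∑ y ∈ Sopt \ Shat i, (f (insert y (Shat i)) - f (Shat i))
        ≤ (Sopt \ Shat i).card * Δ := by
      calc ∑ y ∈ Sopt \ Shat i, (f (insert y (Shat i)) - f (Shat i))
          ≤ ∑ _y ∈ Sopt \ Shat i, Δ := Finset.sum_le_sum hterm
        _ = (Sopt \ Shat i).card * Δ := by
            rw [Finset.sum_const, nsmul_eq_mul]
    have hcard : ((Sopt \ Shat i).card : ℝ) ≤ B := by
      have h1 : (Sopt \ Shat i).card ≤ Sopt.card :=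
        Finset.card_le_card (Finset.sdiff_subset)
      have : (Sopt \ Shat i).card ≤ B := hSopt ▸ h1
      exact_mod_cast this
    have hcardΔ : ((Sopt \ Shat i).card : ℝ) * Δ ≤ B * Δ :=
      mul_le_mul_of_nonneg_right hcard hΔ0
    have hmono1 : f Sopt ≤ f (Shat i ∪ Sopt) :=
      hmono _ _ Finset.subset_union_right
    have hkey := key (Shat i) Sopt
    have hmain : f Sopt - f (Shat i) ≤ B * Δ := by linarith
    have hdiv : (f Sopt - f (Shat i)) / B ≤ Δ := by
      rw [div_le_iff₀ hBpos]
      linarith [mul_comm Δ (B:ℝ)]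
    have hring : (1 - 1/(B:ℝ)) * (f Sopt - f (Shat i))
        = (f Sopt - f (Shat i)) - (f Sopt - f (Shat i)) / B := by
      field_simp
    rw [hring]
    have : f (Shat (i+1)) = f (Shat i) + Δ := by rw [hΔ]; ring
    linarith
  -- iterate
  have main : ∀ i, i ≤ B → f Sopt - f (Shat i) ≤ (1 - 1/(B:ℝ))^i * f Sopt := by
    intro i
    induction i with
    | zero => intro _; simp [h0, hf0]
    | succ n ih =>
      intro hn
      have hn' : n ≤ B := Nat.le_of_succ_le hn
      have hnB : n < B := hn
      calc f Sopt - f (Shat (n+1)) ≤ (1 - 1/(B:ℝ)) * (f Sopt - f (Shat n)) :=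
            step n hnB
        _ ≤ (1 - 1/(B:ℝ)) * ((1 - 1/(B:ℝ))^n * f Sopt) :=
            mul_le_mul_of_nonneg_left (ih hn') hfac
        _ = (1 - 1/(B:ℝ))^(n+1) * f Sopt := by ring
  have h1 : (1 - (1 - 1/(B:ℝ))^B) * f Sopt ≤ f (Shat B) := by
    have := main B le_rfl
    nlinarith
  refine ⟨h1, ?_⟩
  have hexp : (1 - 1/(B:ℝ))^B ≤ 1 / Real.exp 1 := by
    have hle : 1 - 1/(B:ℝ) ≤ Real.exp (-(1/(B:ℝ))) := by
      have := Real.add_one_le_exp (-(1/(B:ℝ)))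
      linarith
    calc (1 - 1/(B:ℝ))^B ≤ (Real.exp (-(1/(B:ℝ))))^B :=
          pow_le_pow_left₀ hfac hle B
      _ = Real.exp ((B:ℕ) * (-(1/(B:ℝ)))) := by
          rw [← Real.exp_nat_mul]
      _ = Real.exp (-1) := by
          congr 1
          field_simp
      _ = 1 / Real.exp 1 := by
          rw [Real.exp_neg]; rw [one_div]
  have := hnonneg Sopt
  nlinarith
end
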